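/- arXiv:2110.14407 — 3 statements merged into one kernel-verified Lean document; each statement's English description precedes it below -/
import Mathlib

section
/- Let H0 be Hermitian with pinching P, and let D_1,…,D_k be matrices with [H0, D_j] = -ω_j D_j for real numbers ω_j. If ω_1 + ⋯ + ω_k ≠ 0, then P(D_1 D_2 ⋯ D_k) = 0, while if ω_1 + ⋯ + ω_k = 0 then P(D_1 ⋯ D_k) = D_1 ⋯ D_k. -/
open Matrix

theorem pinching_of_eigenoperator_product
    {n ι : Type*} [Fintype n] [DecidableEq n] [Fintype ι] [DecidableEq ι]
    (Pr : ι → Matrix n n ℂ)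
    (hherm : ∀ e, (Pr e)ᴴ = Pr e)
    (horth : ∀ e e', Pr e * Pr e' = if e = e' then Pr e else 0)
    (hsum : ∑ e, Pr e = 1)
    (eps : ι → ℝ) (heps : Function.Injective eps)
    (H0 : Matrix n n ℂ) (hH0 : H0 = ∑ e, (eps e : ℂ) • Pr e)
    (k : ℕ) (D : Fin k → Matrix n n ℂ) (ω : Fin k → ℝ)
    (hD : ∀ j, H0 * D j - D j * H0 = -(ω j : ℂ) • D j) :
    ((∑ j, ω j) ≠ 0 →
        ∑ e, Pr e * (List.ofFn D).prod * Pr e = 0) ∧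
    ((∑ j, ω j) = 0 →
        ∑ e, Pr e * (List.ofFn D).prod * Pr e = (List.ofFn D).prod) := by
  have hPrH0 : ∀ e, Pr e * H0 = (eps e : ℂ) • Pr e := by
    intro e
    rw [hH0, Finset.mul_sum]
    simp [Matrix.mul_smul, horth]
  have hH0Pr : ∀ e, H0 * Pr e = (eps e : ℂ) • Pr e := by
    intro e
    rw [hH0, Finset.sum_mul]
    simp [Matrix.smul_mul, horth]
  have hcommgen : ∀ (k : ℕ) (D : Fin k → Matrix n n ℂ) (ω : Fin k → ℝ),
      (∀ j, H0 * D j - D j * H0 = -(ω j : ℂ) • D j) →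
      H0 * (List.ofFn D).prod - (List.ofFn D).prod * H0
        = -(((∑ j, ω j : ℝ)) : ℂ) • (List.ofFn D).prod := by
    intro k
    induction k with
    | zero => intro D ω hD; simp
    | succ m ih =>
        intro D ω hD
        have h0 := hD 0
        have hrest := ih (fun j => D j.succ) (fun j => ω j.succ)
          (fun j => hD j.succ)
        set A := D 0
        set B := (List.ofFn (fun j => D (Fin.succ j))).prod
        have hMsucc : (List.ofFn D).prod = A * B := by
          simp [List.ofFn_succ, A, B]
        rw [hMsucc]
        have expand : H0 * (A * B) - (A * B) * H0
            = (H0 * A - A * H0) * B + A * (H0 * B - B * H0) := by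
          noncomm_ring
        rw [expand, h0, hrest]
        rw [Fin.sum_univ_succ]
        push_cast
        rw [Matrix.smul_mul, Matrix.mul_smul]
        rw [← add_smul]
        congr 1
        ring
  set M := (List.ofFn D).prod with hM
  have hcomm : H0 * M - M * H0 = -(((∑ j, ω j : ℝ)) : ℂ) • M :=
    hcommgen k D ω hD
  have key : ∀ e e', (((eps e : ℂ) - eps e') + ((∑ j, ω j : ℝ) : ℂ)) •
      (Pr e * M * Pr e') = 0 := by
    intro e e'
    have h1 : Pr e * (H0 * M - M * H0) * Pr e'
        = ((eps e : ℂ) - eps e') • (Pr e * M * Pr e') := by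
      rw [Matrix.mul_sub, Matrix.sub_mul]
      rw [show Pr e * (H0 * M) = (Pr e * H0) * M by rw [mul_assoc],
        hPrH0, show Pr e * (M * H0) * Pr e' = Pr e * M * (H0 * Pr e') by
          simp [mul_assoc], hH0Pr]
      rw [Matrix.smul_mul, Matrix.smul_mul, Matrix.mul_smul, sub_smul]
    have h2 : Pr e * (H0 * M - M * H0) * Pr e'
        = -(((∑ j, ω j : ℝ)) : ℂ) • (Pr e * M * Pr e') := by
      rw [hcomm, Matrix.mul_smul, Matrix.smul_mul]
    rw [h2] at h1
    rw [add_smul]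
    rw [← h1]
    simp
  constructor
  · intro hne
    have hc : ((∑ j, ω j : ℝ) : ℂ) ≠ 0 := by exact_mod_cast hne
    apply Finset.sum_eq_zero
    intro e _
    have := key e e
    simp only [sub_self, zero_add] at this
    exact (smul_eq_zero.mp this).resolve_left hc
  · intro hzero
    have hoff : ∀ e e', e ≠ e' → Pr e * M * Pr e' = 0 := by
      intro e e' hne
      have := key e e'
      rw [hzero] at this
      simp only [Complex.ofReal_zero, add_zero] at this
      refine (smul_eq_zero.mp this).resolve_left ?_
      intro h
      apply hne
      apply heps
      have : (eps e : ℂ) = eps e' := by linear_combination h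
      exact_mod_cast this
    have : M = ∑ e, ∑ e', Pr e * M * Pr e' := by
      calc M = (∑ e, Pr e) * M * (∑ e', Pr e') := by rw [hsum]; simp
        _ = ∑ e, ∑ e', Pr e * M * Pr e' := by
            rw [Finset.sum_mul, Finset.sum_mul]
            refine Finset.sum_congr rfl fun e _ => ?_
            rw [Finset.mul_sum]
    conv_rhs => rw [this]
    refine Finset.sum_congr rfl fun e _ => ?_
    rw [Finset.sum_eq_single e]
    · intro e' _ hne
      exact hoff e e' (Ne.symm hne)
    · intro h; exact absurd (Finset.mem_univ e) h
end

section
/- For real numbers ω_1, …, ω_n such that all partial sums Σ_{j=1}^k ω_j (1 ≤ k ≤ n) are nonzero, the iterated integral ∫_0^β dβ_1 ∫_0^{β_1} dβ_2 ⋯ ∫_0^{β_{n-1}} dβ_n exp(−Σ_{j=1}^n β_j ω_j) equals 1/∏_{k=1}^n (Σ_{j=1}^k ω_j) + Σ_{p=1}^n (−1)^p exp(−β Σ_{i=1}^p ω_i) / [ (∏_{m=1}^p Σ_{i=m}^p ω_i) (∏_{k=p+1}^n Σ_{j=p+1}^k ω_j) ], assuming also all sums Σ_{i=m}^p ω_i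 appearing in the denominators are nonzero. -/
/-!
Write `X_p = ω_0 + ⋯ + ω_{p-1}`, so `X_0 = 0`. The right-hand side is
`E_n(X)(β) = ∑_{p ≤ n} e^{-β X_p} / ∏_{m ≠ p} (X_m - X_p)`, the divided difference of
`t ↦ e^{β t}` at the nodes `-X_0, …, -X_n`. Because `X_0 = 0`, differentiating in `β` kills the
`p = 0` term and cancels the factor `X_0 - X_p` of every other denominator, so
`∂_β E_{n+1}(X) = E_n(X_1, …, X_{n+1})`, while `E_{n+1}(X)(0) = 0` is the Lagrange identity
`∑_p 1 / ∏_{m ≠ p} (x_m - x_p) = 0`. Hence `E_{n+1}(X)(β) = ∫_0^β E_n(X_1, …, X_{n+1})`.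
The iterated integral obeys the same recursion once the inner nodes are translated by `ω_0`,
which only multiplies `E_n` by an exponential, and the formula follows by induction on `n`.
-/

/-- The iterated simplex integral
`h_n(β; ω_0, …, ω_{n-1}) = ∫_0^β dβ_1 ⋯ ∫_0^{β_{n-1}} dβ_n exp(-∑ β_j ω_{j-1})`,
defined recursively on the number of integrations. -/
noncomputable def iterSimplexInt (ω : ℕ → ℝ) : ℕ → ℝ → ℝ
  | 0, _ => 1
  | n + 1, β =>
      ∫ t in (0:ℝ)..β, Real.exp (-(ω 0 * t)) * iterSimplexInt (fun k => ω (k + 1)) n t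

open Finset

theorem sum_inv_prod_erase_sub_eq_zero {ι F : Type*} [DecidableEq ι] [Field F] {s : Finset ι}
    {x : ι → F} (hx : Set.InjOn x s) (hs : 1 < #s) :
    ∑ i ∈ s, (∏ j ∈ s.erase i, (x j - x i))⁻¹ = 0 := by
  have hcoeff := Lagrange.coeff_eq_sum hx (P := 1) (by
    rw [Polynomial.degree_one]; exact_mod_cast (by omega : 0 < #s))
  rw [Polynomial.coeff_one, if_neg (by omega)] at hcoeff
  simp only [Polynomial.eval_one, one_div] at hcoeff
  have hsign : ∀ i ∈ s,
      ∏ j ∈ s.erase i, (x j - x i) = (-1) ^ (#s - 1) * ∏ j ∈ s.erase i, (x i - x j) := by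
    intro i hi
    rw [← card_erase_of_mem hi, ← prod_neg]
    simp only [neg_sub]
  rw [sum_congr rfl fun i hi => by rw [hsign i hi, mul_inv], ← mul_sum, ← hcoeff, mul_zero]

theorem prod_erase_succ_range {M : Type*} [CommMonoid M] (f : ℕ → M) (n p : ℕ) :
    ∏ m ∈ (range (n + 1)).erase (p + 1), f m = f 0 * ∏ m ∈ (range n).erase p, f (m + 1) := by
  rw [range_add_one', erase_insert_of_ne (by omega), prod_insert (by simp)]
  congr 1
  rw [show ((range n).map _).erase (p + 1) = ((range n).erase p).map _ from
    (map_erase _ _ _).symm, prod_map]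
  rfl

theorem prod_erase_range_sub {R : Type*} [CommRing R] (x : ℕ → R) {n p : ℕ} (hp : p ≤ n) :
    ∏ m ∈ (range (n + 1)).erase p, (x m - x p) =
      (-1) ^ p * ((∏ m ∈ range p, (x p - x m)) * ∏ k ∈ Ico p n, (x (k + 1) - x p)) := by
  have hsplit : (range (n + 1)).erase p = range p ∪ Ico (p + 1) (n + 1) := by
    ext m; simp only [mem_erase, mem_range, mem_union, mem_Ico]; omega
  rw [hsplit, prod_union (disjoint_left.2 fun m hm hm' => by simp at hm hm'; omega),
    prod_Ico_add' (fun k => x k - x p), ← mul_assoc]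
  congr 1
  simpa using prod_neg (s := range p) (fun m => x p - x m)

theorem sum_Icc_eq_sum_range_sub {M : Type*} [AddCommGroup M] (f : ℕ → M) {a b : ℕ}
    (hab : a ≤ b + 1) : ∑ i ∈ Icc a b, f i = ∑ i ∈ range (b + 1), f i - ∑ i ∈ range a, f i := by
  rw [← Ico_add_one_right_eq_Icc, sum_Ico_eq_sub _ hab]

theorem injOn_partialSums {ω : ℕ → ℝ} {n : ℕ}
    (h : ∀ a b : ℕ, a ≤ b → b < n → ∑ i ∈ Icc a b, ω i ≠ 0) :
    Set.InjOn (fun k => ∑ i ∈ range k, ω i) (range (n + 1)) := by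
  have hne : ∀ a b, a < b → b ≤ n → ∑ i ∈ range b, ω i ≠ ∑ i ∈ range a, ω i :=
    fun a b hab hb heq => h a (b - 1) (by omega) (by omega) (by
      rw [sum_Icc_eq_sum_range_sub _ (by omega), Nat.sub_add_cancel (by omega), heq, sub_self])
  intro a ha b hb hab
  simp only [coe_range, Set.mem_Iio] at ha hb
  by_contra hba
  rcases lt_or_gt_of_ne hba with hlt | hlt
  · exact hne a b hlt (by omega) hab.symm
  · exact hne b a hlt (by omega) hab

noncomputable def expDividedDiff (x : ℕ → ℝ) (n : ℕ) (β : ℝ) : ℝ :=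
  ∑ p ∈ range (n + 1), Real.exp (-(β * x p)) / ∏ m ∈ (range (n + 1)).erase p, (x m - x p)

theorem continuous_expDividedDiff (x : ℕ → ℝ) (n : ℕ) : Continuous (expDividedDiff x n) := by
  unfold expDividedDiff
  fun_prop

theorem expDividedDiff_sub_const (x : ℕ → ℝ) (n : ℕ) (c β : ℝ) :
    expDividedDiff (fun k => x k - c) n β = Real.exp (β * c) * expDividedDiff x n β := by
  simp only [expDividedDiff, mul_sum, sub_sub_sub_cancel_right]
  refine sum_congr rfl fun p _ => ?_
  rw [← mul_div_assoc, ← Real.exp_add]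
  ring_nf

theorem expDividedDiff_zero_right {x : ℕ → ℝ} {n : ℕ} (hx : Set.InjOn x (range (n + 2))) :
    expDividedDiff x (n + 1) 0 = 0 := by
  simpa [expDividedDiff] using sum_inv_prod_erase_sub_eq_zero hx (by simp)

theorem hasDerivAt_expDividedDiff {x : ℕ → ℝ} {n : ℕ} (hx0 : x 0 = 0)
    (hx : Set.InjOn x (range (n + 2))) (β : ℝ) :
    HasDerivAt (expDividedDiff x (n + 1)) (expDividedDiff (fun k => x (k + 1)) n β) β := by
  have hderiv := HasDerivAt.fun_sum (u := range (n + 2)) fun p _ =>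
    (((hasDerivAt_id β).mul_const (x p)).neg.exp).div_const
      (∏ m ∈ (range (n + 2)).erase p, (x m - x p))
  refine (hderiv.congr_deriv ?_).congr_of_eventuallyEq (.of_forall fun t => rfl)
  rw [sum_range_succ', hx0]
  simp only [expDividedDiff, mul_zero, neg_zero, zero_div, add_zero]
  refine sum_congr rfl fun p hp => ?_
  have hxp : x (p + 1) ≠ 0 := fun h =>
    p.succ_ne_zero (hx (by simp at hp ⊢; omega) (by simp) (h.trans hx0.symm))
  rw [prod_erase_succ_range, hx0]
  simp only [Pi.neg_apply, id]
  field_simp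
  ring

theorem integral_expDividedDiff {x : ℕ → ℝ} {n : ℕ} (hx0 : x 0 = 0)
    (hx : Set.InjOn x (range (n + 2))) (β : ℝ) :
    ∫ t in (0 : ℝ)..β, expDividedDiff (fun k => x (k + 1)) n t = expDividedDiff x (n + 1) β := by
  rw [intervalIntegral.integral_eq_sub_of_hasDerivAt
    (fun t _ => hasDerivAt_expDividedDiff hx0 hx t)
    ((continuous_expDividedDiff _ n).intervalIntegrable _ _), expDividedDiff_zero_right hx,
    sub_zero]

theorem iterSimplexInt_eq_expDividedDiff {n : ℕ} {ω : ℕ → ℝ}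
    (hω : Set.InjOn (fun k => ∑ i ∈ range k, ω i) (range (n + 1))) (β : ℝ) :
    iterSimplexInt ω n β = expDividedDiff (fun k => ∑ i ∈ range k, ω i) n β := by
  induction n generalizing ω β with
  | zero => simp [iterSimplexInt, expDividedDiff]
  | succ n ih =>
    set X := fun k => ∑ i ∈ range k, ω i
    have hshift : (fun k => ∑ i ∈ range k, ω (i + 1)) = fun k => X (k + 1) - ω 0 := by
      funext k
      simp [X, sum_range_succ']
    have hω' : Set.InjOn (fun k => ∑ i ∈ range k, ω (i + 1)) (range (n + 1)) := by
      rw [hshift]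
      intro a ha b hb hab
      simpa using hω (by simp at ha ⊢; omega) (by simp at hb ⊢; omega) (sub_left_injective hab)
    rw [iterSimplexInt, ← integral_expDividedDiff (x := X) (by simp [X]) hω β]
    refine intervalIntegral.integral_congr fun t _ => ?_
    simp only [ih hω' t, hshift, expDividedDiff_sub_const, ← mul_assoc, ← Real.exp_add]
    rw [show -(ω 0 * t) + t * ω 0 = 0 by ring, Real.exp_zero, one_mul]

theorem iterated_simplex_integral_formula_general
    (n : ℕ) (ω : ℕ → ℝ) (β : ℝ)
    (hsums : ∀ a b : ℕ, a ≤ b → b < n → ∑ i ∈ Finset.Icc a b, ω i ≠ 0) :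
    iterSimplexInt ω n β =
      1 / ∏ k ∈ Finset.range n, ∑ j ∈ Finset.range (k + 1), ω j
      + ∑ p ∈ Finset.Icc 1 n,
          (-1 : ℝ) ^ p * Real.exp (-(β * ∑ i ∈ Finset.range p, ω i)) /
            ((∏ m ∈ Finset.range p, ∑ i ∈ Finset.Icc m (p - 1), ω i) *
              (∏ k ∈ Finset.Icc p (n - 1), ∑ j ∈ Finset.Icc p k, ω j)) := by
  have hsplit : range (n + 1) = insert 0 (Icc 1 n) := by ext; simp; omega
  rw [iterSimplexInt_eq_expDividedDiff (injOn_partialSums hsums), expDividedDiff, hsplit,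
    sum_insert (by simp), ← hsplit]
  congr 1
  · rw [prod_erase_range_sub _ (Nat.zero_le n)]
    simp
  · refine sum_congr rfl fun p hp => ?_
    obtain ⟨hp1, hpn⟩ := mem_Icc.1 hp
    have hIco : Icc p (n - 1) = Ico p n := by
      rw [← Ico_add_one_right_eq_Icc, Nat.sub_add_cancel (by omega)]
    rw [prod_erase_range_sub _ hpn, hIco,
      prod_congr rfl fun m hm => sum_Icc_eq_sum_range_sub ω (by simp at hm; omega),
      prod_congr rfl fun k hk => sum_Icc_eq_sum_range_sub ω (by simp at hk; omega),
      Nat.sub_add_cancel hp1]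
    rcases neg_one_pow_eq_or ℝ p with h | h <;> simp [h, neg_div, div_neg]

theorem iterated_simplex_integral_formula
    (n : ℕ) (ω : ℕ → ℝ) (β : ℝ) (hβ : 0 < β)
    (hsums : ∀ a b : ℕ, a ≤ b → b < n → ∑ i ∈ Finset.Icc a b, ω i ≠ 0) :
    iterSimplexInt ω n β =
      1 / ∏ k ∈ Finset.range n, ∑ j ∈ Finset.range (k + 1), ω j
      + ∑ p ∈ Finset.Icc 1 n,
          (-1 : ℝ) ^ p * Real.exp (-(β * ∑ i ∈ Finset.range p, ω i)) /
            ((∏ m ∈ Finset.range p, ∑ i ∈ Finset.Icc m (p - 1), ω i) *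
              (∏ k ∈ Finset.Icc p (n - 1), ∑ j ∈ Finset.Icc p k, ω j)) :=
  iterated_simplex_integral_formula_general n ω β hsums
end

section
/- Let β > 0, let ω_a, ω_b > 0 with ω_a ≠ ω_b, and set ΔS = β|g|² (ω_a tanh(βω_a/2) − ω_b tanh(βω_b/2))/(ω_a² − ω_b²). Then ΔS is equal to β|g|² [ ((1−e^{−β(ω_a−ω_b)})/(ω_a−ω_b)) · (1 − n_a) n_b + ((1−e^{−β(ω_a+ω_b)})/(ω_a+ω_b)) · (1−n_a)(1−n_b) ], where n_i = 1/(e^{βω_i}+1) for i ∈ {a,b}; in particular ΔS > 0. -/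
/-!
Write `n(x) = 1 / (eˣ + 1)` for the Fermi function, so that `tanh (x / 2) = 1 - 2 n(x)`.
Detailed balance `1 - n(x) = eˣ n(x)` turns the two thermal factors of the claimed formula into
`(1 - n(x)) n(y) (1 - e^{y-x}) = n(y) - n(x)` and `(1 - n(x)) (1 - n(y)) (1 - e^{-(x+y)}) = 1 - n(x) - n(y)`,
and with these the formula is the partial fraction decomposition of the quotient by
`ωa² - ωb² = (ωa - ωb)(ωa + ωb)`. Positivity is then termwise: `1 - e^{-β t}` has the sign of `t`.
-/

open Real

noncomputable def fermi (x : ℝ) : ℝ := 1 / (exp x + 1)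

lemma fermi_pos (x : ℝ) : 0 < fermi x := by
  unfold fermi; positivity

lemma one_sub_fermi (x : ℝ) : 1 - fermi x = exp x / (exp x + 1) := by
  unfold fermi; field_simp; ring

lemma one_sub_fermi_pos (x : ℝ) : 0 < 1 - fermi x := by
  rw [one_sub_fermi]; positivity

lemma tanh_half_eq_one_sub_two_mul_fermi (x : ℝ) : tanh (x / 2) = 1 - 2 * fermi x := by
  have hx : exp x = exp (x / 2) ^ 2 := by rw [← exp_nat_mul]; ring_nf
  rw [tanh_eq_sinh_div_cosh, sinh_eq, cosh_eq, fermi, hx, exp_neg]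
  field_simp
  ring

lemma one_sub_fermi_mul_fermi_mul_one_sub_exp (x y : ℝ) :
    (1 - fermi x) * fermi y * (1 - exp (-(x - y))) = fermi y - fermi x := by
  rw [one_sub_fermi, exp_neg, exp_sub]
  unfold fermi
  field_simp
  ring

lemma one_sub_fermi_mul_one_sub_fermi_mul_one_sub_exp (x y : ℝ) :
    (1 - fermi x) * (1 - fermi y) * (1 - exp (-(x + y))) = 1 - fermi x - fermi y := by
  rw [one_sub_fermi, one_sub_fermi, exp_neg, exp_add]
  unfold fermi
  field_simp
  ring

lemma mul_tanh_sub_mul_tanh_div_sq_sub_sq (c u v : ℝ) (hsub : u - v ≠ 0) (hadd : u + v ≠ 0) :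
    (u * tanh (c * u / 2) - v * tanh (c * v / 2)) / (u ^ 2 - v ^ 2) =
      (1 - exp (-(c * (u - v)))) / (u - v) * ((1 - fermi (c * u)) * fermi (c * v)) +
        (1 - exp (-(c * (u + v)))) / (u + v) * ((1 - fermi (c * u)) * (1 - fermi (c * v))) := by
  rw [div_mul_eq_mul_div, div_mul_eq_mul_div, mul_comm (1 - exp _), mul_comm (1 - exp _),
    mul_sub c u v, mul_add c u v, one_sub_fermi_mul_fermi_mul_one_sub_exp,
    one_sub_fermi_mul_one_sub_fermi_mul_one_sub_exp, tanh_half_eq_one_sub_two_mul_fermi,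
    tanh_half_eq_one_sub_two_mul_fermi, sq_sub_sq]
  field_simp
  ring

lemma one_sub_exp_neg_mul_div_pos {β t : ℝ} (hβ : 0 < β) (ht : t ≠ 0) :
    0 < (1 - exp (-(β * t))) / t := by
  rcases ht.lt_or_gt with ht | ht
  · refine div_pos_of_neg_of_neg ?_ ht
    have : 1 < exp (-(β * t)) := one_lt_exp_iff.mpr (by nlinarith)
    linarith
  · refine div_pos ?_ ht
    have : exp (-(β * t)) < 1 := exp_lt_one_iff.mpr (by nlinarith)
    linarith

theorem information_loss_two_two_level_systems
    (β : ℝ) (hβ : 0 < β) (g : ℂ) (hg : g ≠ 0)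
    (ωa ωb : ℝ) (hωa : 0 < ωa) (hωb : 0 < ωb) (hne : ωa ≠ ωb)
    (na nb ΔS : ℝ)
    (hna : na = 1 / (Real.exp (β * ωa) + 1))
    (hnb : nb = 1 / (Real.exp (β * ωb) + 1))
    (hΔS : ΔS = β * ‖g‖ ^ 2 *
      (ωa * Real.tanh (β * ωa / 2) - ωb * Real.tanh (β * ωb / 2)) / (ωa ^ 2 - ωb ^ 2)) :
    ΔS = β * ‖g‖ ^ 2 *
        ((1 - Real.exp (-(β * (ωa - ωb)))) / (ωa - ωb) * ((1 - na) * nb)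
          + (1 - Real.exp (-(β * (ωa + ωb)))) / (ωa + ωb) * ((1 - na) * (1 - nb)))
      ∧ 0 < ΔS := by
  change na = fermi (β * ωa) at hna
  change nb = fermi (β * ωb) at hnb
  subst hna hnb hΔS
  have hsub : ωa - ωb ≠ 0 := sub_ne_zero.mpr hne
  have hadd : ωa + ωb ≠ 0 := (add_pos hωa hωb).ne'
  rw [mul_div_assoc, mul_tanh_sub_mul_tanh_div_sq_sub_sq β ωa ωb hsub hadd]
  refine ⟨rfl, mul_pos (mul_pos hβ (pow_pos (norm_pos_iff.mpr hg) 2)) (add_pos ?_ ?_)⟩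
  · exact mul_pos (one_sub_exp_neg_mul_div_pos hβ hsub) (mul_pos (one_sub_fermi_pos _) (fermi_pos _))
  · exact mul_pos (one_sub_exp_neg_mul_div_pos hβ hadd)
      (mul_pos (one_sub_fermi_pos _) (one_sub_fermi_pos _))
end
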